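/- arXiv:2410.21942 — 3 statements merged into one kernel-verified Lean document; each statement's English description precedes it below -/
import Mathlib

section
/- (Gyarmati–Matolcsi–Ruzsa sub-multiplicativity, case K = 3) For finite nonempty sets A₁, A₂, A₃ of integers, |A₁ + A₂ + A₃|² ≤ |A₂ + A₃| · |A₁ + A₃| · |A₁ + A₂|. -/
/-!
Write `S = A + B + C` and `P = A + B`. For `s ∈ S` let `c s` be the least `γ ∈ C`, for a fixed
well-order of `G`, with `s - γ ∈ P`. This choice is coherent: if `s - c t` and `t - c s` both lie
in `P`, then `c s = c t`. The map `s ↦ s - c s` sends `S` into `P`, so by Cauchy–Schwarz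
`|S|² ≤ |P| · |E|`, where `E` is the set of pairs `(s, t)` with `s - c s = t - c t`. Writing this
common value as `a + b` with `a ∈ A`, `b ∈ B`, the map `(s, t) ↦ (a + c t, b + c s)` sends `E`
into `(A + C) × (B + C)`, and coherence makes it injective.
-/

open Finset Pointwise

section Fibres
variable {α β : Type*} [DecidableEq β]

theorem card_sq_le_card_mul_card_filter_eq {s : Finset α} {t : Finset β} {f : α → β}
    (hf : ∀ a ∈ s, f a ∈ t) : #s ^ 2 ≤ #t * #{x ∈ s ×ˢ s | f x.1 = f x.2} := by
  have hpairs : #{x ∈ s ×ˢ s | f x.1 = f x.2} = ∑ b ∈ t, #{a ∈ s | f a = b} ^ 2 := by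
    have hmaps : ∀ x ∈ {x ∈ s ×ˢ s | f x.1 = f x.2}, f x.1 ∈ t := fun x hx =>
      hf _ (mem_product.1 (mem_filter.1 hx).1).1
    rw [card_eq_sum_card_fiberwise hmaps]
    refine sum_congr rfl fun b _ => ?_
    rw [sq, ← card_product, filter_filter]
    congr 1
    ext ⟨a, a'⟩
    simp only [mem_filter, mem_product]
    grind
  rw [hpairs, card_eq_sum_card_fiberwise hf]
  exact sq_sum_le_card_mul_sum_sq
end Fibres

variable {G : Type*} [AddCommGroup G] [DecidableEq G]

structure IsCoherentSummand (P C : Finset G) (c : G → G) : Prop where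
  mem : ∀ s ∈ P + C, c s ∈ C
  sub_mem : ∀ s ∈ P + C, s - c s ∈ P
  eq_of_sub_mem : ∀ s ∈ P + C, ∀ t ∈ P + C, s - c t ∈ P → t - c s ∈ P → c s = c t

theorem exists_isCoherentSummand (P C : Finset G) : ∃ c, IsCoherentSummand P C c := by
  have hmin (s : G) (hs : s ∈ P + C) :
      ∃ γ ∈ C, s - γ ∈ P ∧ ∀ δ ∈ C, s - δ ∈ P → ¬ WellOrderingRel δ γ := by
    obtain ⟨p, hp, γ, hγ, rfl⟩ := mem_add.1 hs
    obtain ⟨γ₀, ⟨hγ₀, hγ₀P⟩, hγ₀min⟩ := WellOrderingRel.isWellOrder.wf.has_min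
      {δ | δ ∈ C ∧ p + γ - δ ∈ P} ⟨γ, hγ, by simpa using hp⟩
    exact ⟨γ₀, hγ₀, hγ₀P, fun δ hδ hδP => hγ₀min δ ⟨hδ, hδP⟩⟩
  choose! c hcC hcP hcmin using hmin
  refine ⟨c, hcC, hcP, fun s hs t ht hst hts => ?_⟩
  rcases trichotomous_of WellOrderingRel (c s) (c t) with hlt | heq | hgt
  · exact absurd hlt (hcmin t ht _ (hcC s hs) hts)
  · exact heq
  · exact absurd hgt (hcmin s hs _ (hcC t ht) hst)

namespace IsCoherentSummand

variable {P C : Finset G} {c : G → G}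

theorem eq_of_add_eq (hc : IsCoherentSummand P C c) {s t x y x' y' : G} (hs : s ∈ P + C)
    (ht : t ∈ P + C) (hsxy : s - c s = x + y) (htxy : t - c t = x' + y')
    (hxy' : x + y' ∈ P) (hx'y : x' + y ∈ P) (heq : x + c s = x' + c t) : c s = c t := by
  refine hc.eq_of_sub_mem s hs t ht ?_ ?_
  · convert hx'y using 1
    linear_combination (norm := abel) hsxy + heq
  · convert hxy' using 1
    linear_combination (norm := abel) htxy - heq

theorem card_filter_sub_eq_le {A B : Finset G} (hc : IsCoherentSummand (A + B) C c) :
    #{x ∈ (A + B + C) ×ˢ (A + B + C) | x.1 - c x.1 = x.2 - c x.2} ≤ #(A + C) * #(B + C) := by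
  have hdecomp (p : G) (hp : p ∈ A + B) : ∃ a ∈ A, ∃ b ∈ B, a + b = p := mem_add.1 hp
  choose! a haA b hbB hab using hdecomp
  rw [← card_product]
  refine card_le_card_of_injOn
    (fun x => (a (x.1 - c x.1) + c x.2, b (x.1 - c x.1) + c x.1)) ?_ ?_
  · intro x hx
    obtain ⟨⟨hs, ht⟩, -⟩ := by simpa only [coe_filter, mem_product] using hx
    exact mem_product.2 ⟨add_mem_add (haA _ (hc.sub_mem _ hs)) (hc.mem _ ht),
      add_mem_add (hbB _ (hc.sub_mem _ hs)) (hc.mem _ hs)⟩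
  · rintro ⟨s, t⟩ hx ⟨s', t'⟩ hx' heq
    obtain ⟨⟨hs, ht⟩, hst⟩ := by simpa only [coe_filter, mem_product] using hx
    obtain ⟨⟨hs', ht'⟩, hst'⟩ := by simpa only [coe_filter, mem_product] using hx'
    obtain ⟨heq₁, heq₂⟩ := Prod.ext_iff.1 heq
    dsimp only at hst hst' heq₁ heq₂
    set p := s - c s
    set p' := s' - c s'
    have hp := hc.sub_mem _ hs
    have hp' := hc.sub_mem _ hs'
    have hct : c t = c t' := hc.eq_of_add_eq ht ht' (hst ▸ (hab p hp).symm)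
      (hst' ▸ (hab p' hp').symm) (add_mem_add (haA p hp) (hbB p' hp'))
      (add_mem_add (haA p' hp') (hbB p hp)) heq₁
    have hcs : c s = c s' := hc.eq_of_add_eq hs hs' (by rw [add_comm, hab p hp])
      (by rw [add_comm, hab p' hp'])
      (by rw [add_comm (b p)]; exact add_mem_add (haA p' hp') (hbB p hp))
      (by rw [add_comm (b p')]; exact add_mem_add (haA p hp) (hbB p' hp')) heq₂
    have hpp' : p = p' := by
      rw [← hab p hp, ← hab p' hp', add_right_cancel (heq₁.trans (by rw [hct])),
        add_right_cancel (heq₂.trans (by rw [hcs]))]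
    refine Prod.ext ?_ ?_
    · calc s = p + c s := (sub_add_cancel _ _).symm
        _ = p' + c s' := by rw [hpp', hcs]
        _ = s' := sub_add_cancel _ _
    · calc t = p + c t := by rw [hst, sub_add_cancel]
        _ = p' + c t' := by rw [hpp', hct]
        _ = t' := by rw [hst', sub_add_cancel]

end IsCoherentSummand

theorem Finset.card_add_add_sq_le (A B C : Finset G) :
    #(A + B + C) ^ 2 ≤ #(B + C) * #(A + C) * #(A + B) := by
  obtain ⟨c, hc⟩ := exists_isCoherentSummand (A + B) C
  calc #(A + B + C) ^ 2
      ≤ #(A + B) * #{x ∈ (A + B + C) ×ˢ (A + B + C) | x.1 - c x.1 = x.2 - c x.2} :=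
        card_sq_le_card_mul_card_filter_eq hc.sub_mem
    _ ≤ #(A + B) * (#(A + C) * #(B + C)) := Nat.mul_le_mul_left _ hc.card_filter_sub_eq_le
    _ = #(B + C) * #(A + C) * #(A + B) := by ring

theorem gmr_submultiplicativity_three_general (A₁ A₂ A₃ : Finset ℤ) :
    (A₁ + A₂ + A₃).card ^ 2 ≤ (A₂ + A₃).card * (A₁ + A₃).card * (A₁ + A₂).card :=
  card_add_add_sq_le A₁ A₂ A₃

theorem gmr_submultiplicativity_three (A₁ A₂ A₃ : Finset ℤ)
    (h₁ : A₁.Nonempty) (h₂ : A₂.Nonempty) (h₃ : A₃.Nonempty) :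
    (A₁ + A₂ + A₃).card ^ 2 ≤ (A₂ + A₃).card * (A₁ + A₃).card * (A₁ + A₂).card :=
  gmr_submultiplicativity_three_general A₁ A₂ A₃
end

section
/- If A₁ + ⋯ + A_K is a K-fold sumset of finite nonempty subsets of ℤ and each (K−1)-fold sumset Bᵢ = ∑_{j≠i} A_j satisfies |Bᵢ| ≤ s, then |A₁ + ⋯ + A_K| ≤ s^(K/(K−1)). -/
/-!
Send every `x ∈ A₁ + ⋯ + A_K` to its lexicographically least representation `x = ∑ gᵢ` with
`gᵢ ∈ Aᵢ`; this embeds the sumset into `ℤ^K` as a set `R`. If two minimal representations `g, g'`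
have the same partial sum `∑_{j ≠ i}`, exchanging their `i`-th coordinates gives representations
of the same two sums, and lexicographic minimality of both forces `g` and `g'` to agree off `i`.
So `g ↦ ∑_{j ≠ i} gⱼ` is injective on the projection `πᵢ R` forgetting coordinate `i`, and
`|πᵢ R| ≤ |Bᵢ|`. The discrete Loomis–Whitney inequality `|R|^(K-1) ≤ ∏ᵢ |πᵢ R|`, proved by
slicing along the last coordinate and applying Hölder's inequality to the slices, finishes the
proof: `|A₁ + ⋯ + A_K|^(K-1) ≤ ∏ᵢ |Bᵢ| ≤ s^K`.
-/

open Finset Function MeasureTheory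
open scoped Pointwise ENNReal

namespace ENNReal

theorem sum_prod_rpow_le_prod_sum_rpow {α ι : Type*} (T : Finset α) (s : Finset ι)
    (f : ι → α → ℝ≥0∞) {p : ι → ℝ} (hp : ∑ i ∈ s, p i = 1) (h2p : ∀ i ∈ s, 0 ≤ p i) :
    ∑ t ∈ T, ∏ i ∈ s, f i t ^ p i ≤ ∏ i ∈ s, (∑ t ∈ T, f i t) ^ p i := by
  let _ : MeasurableSpace α := ⊤
  simpa [lintegral_finset] using lintegral_prod_norm_pow_le (μ := Measure.count.restrict T) s
    (fun i _ => (measurable_from_top (f := f i)).aemeasurable) hp h2p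

theorem sum_pow_le_mul_prod_sum {α : Type*} {m : ℕ} (hm : m ≠ 0) (T : Finset α) (c : ℝ≥0∞)
    (x : α → ℝ≥0∞) (y : Fin m → α → ℝ≥0∞) (h : ∀ t ∈ T, x t ^ m ≤ c * ∏ i, y i t) :
    (∑ t ∈ T, x t) ^ m ≤ c * ∏ i, ∑ t ∈ T, y i t := by
  have hm₀ : (0 : ℝ) < m := by positivity
  have hx : ∀ t ∈ T, x t ≤ c ^ (m : ℝ)⁻¹ * ∏ i, y i t ^ (m : ℝ)⁻¹ := fun t ht => by
    rw [prod_rpow_of_nonneg (by positivity), ← mul_rpow_of_nonneg _ _ (by positivity),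
      le_rpow_inv_iff hm₀, rpow_natCast]
    exact h t ht
  rw [← rpow_natCast, ← le_rpow_inv_iff hm₀]
  calc ∑ t ∈ T, x t ≤ c ^ (m : ℝ)⁻¹ * ∑ t ∈ T, ∏ i, y i t ^ (m : ℝ)⁻¹ := by
        rw [mul_sum]; exact sum_le_sum hx
    _ ≤ c ^ (m : ℝ)⁻¹ * ∏ i, (∑ t ∈ T, y i t) ^ (m : ℝ)⁻¹ := by
        gcongr
        exact sum_prod_rpow_le_prod_sum_rpow T univ y (by simp [hm]) fun _ _ => by positivity
    _ = (c * ∏ i, ∑ t ∈ T, y i t) ^ (m : ℝ)⁻¹ := by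
        rw [mul_rpow_of_nonneg _ _ (by positivity), prod_rpow_of_nonneg (by positivity)]

end ENNReal

namespace Finset

variable {α : Type*} [DecidableEq α]

def lastSlice {n : ℕ} (R : Finset (Fin (n + 1) → α)) (t : α) : Finset (Fin n → α) :=
  {r ∈ R | r (Fin.last n) = t}.image Fin.init

variable {n : ℕ}

theorem card_lastSlice (R : Finset (Fin (n + 1) → α)) (t : α) :
    #(lastSlice R t) = #{r ∈ R | r (Fin.last n) = t} := by
  refine card_image_of_injOn fun r hr r' hr' h => ?_
  rw [← Fin.snoc_init_self r, ← Fin.snoc_init_self r', (mem_filter.1 hr).2,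
    (mem_filter.1 hr').2, h]

theorem card_eq_sum_card_lastSlice (R : Finset (Fin (n + 1) → α)) {T : Finset α}
    (hT : ∀ r ∈ R, r (Fin.last n) ∈ T) : #R = ∑ t ∈ T, #(lastSlice R t) := by
  simp only [card_lastSlice]
  exact card_eq_sum_card_fiberwise hT

theorem lastSlice_subset_image (R : Finset (Fin (n + 1) → α)) (t : α) :
    lastSlice R t ⊆ R.image (· ∘ (Fin.last n).succAbove) := by
  simp only [lastSlice, Fin.succAbove_last]
  exact image_subset_image (filter_subset _ _)

theorem image_lastSlice_subset (R : Finset (Fin (n + 2) → α)) (t : α) (j : Fin (n + 1)) :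
    (lastSlice R t).image (· ∘ j.succAbove) ⊆
      lastSlice (R.image (· ∘ j.castSucc.succAbove)) t := by
  simp only [lastSlice, image_image, subset_iff, mem_image, mem_filter]
  rintro _ ⟨r, ⟨hr, rfl⟩, rfl⟩
  refine ⟨_, ⟨⟨r, hr, rfl⟩, by simp⟩, ?_⟩
  ext k
  simp [Fin.init]

theorem card_pow_le_prod_card_image_comp_succAbove :
    ∀ {n : ℕ} (R : Finset (Fin (n + 1) → α)), R.Nonempty →
      #R ^ n ≤ ∏ i : Fin (n + 1), #(R.image (· ∘ i.succAbove))
  | 0, R, hR => by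
    rw [pow_zero]
    exact prod_pos fun i _ => (hR.image _).card_pos
  | n + 1, R, hR => by
    set T := R.image (· (Fin.last _))
    have hslice : ∀ t ∈ T, (#(lastSlice R t) : ℝ≥0∞) ^ (n + 1) ≤
        #(R.image (· ∘ (Fin.last _).succAbove)) *
          ∏ j : Fin (n + 1), (#(lastSlice (R.image (· ∘ j.castSucc.succAbove)) t) : ℝ≥0∞) := by
      intro t ht
      have hne : (lastSlice R t).Nonempty := by
        obtain ⟨r, hr, rfl⟩ := mem_image.1 ht
        exact ⟨_, mem_image_of_mem _ (mem_filter.2 ⟨hr, rfl⟩)⟩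
      calc (#(lastSlice R t) : ℝ≥0∞) ^ (n + 1)
          = #(lastSlice R t) * (#(lastSlice R t) : ℝ≥0∞) ^ n := pow_succ' _ _
        _ ≤ #(R.image (· ∘ (Fin.last _).succAbove)) *
              ∏ j : Fin (n + 1), (#((lastSlice R t).image (· ∘ j.succAbove)) : ℝ≥0∞) := by
            gcongr
            · exact lastSlice_subset_image R t
            · exact_mod_cast card_pow_le_prod_card_image_comp_succAbove _ hne
        _ ≤ _ := by
            gcongr with j
            exact image_lastSlice_subset R t j
    have hPT : ∀ j : Fin (n + 1), ∀ q ∈ R.image (· ∘ j.castSucc.succAbove),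
        q (Fin.last _) ∈ T := by
      intro j
      simp only [T, forall_mem_image]
      intro r hr
      simpa using mem_image_of_mem (· (Fin.last _)) hr
    have key := ENNReal.sum_pow_le_mul_prod_sum n.succ_ne_zero T _ _ _ hslice
    have hRT : ∀ r ∈ R, r (Fin.last _) ∈ T := fun r hr => mem_image_of_mem _ hr
    simp_rw [← Nat.cast_sum, ← card_eq_sum_card_lastSlice R hRT,
      fun j => (card_eq_sum_card_lastSlice _ (hPT j)).symm] at key
    rw [Fin.prod_univ_castSucc, mul_comm]
    exact_mod_cast key

end Finset

theorem Fin.sum_univ_erase_eq_sum_succAbove {M : Type*} [AddCommMonoid M] {n : ℕ}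
    (f : Fin (n + 1) → M) (i : Fin (n + 1)) :
    ∑ j ∈ univ.erase i, f j = ∑ k, f (i.succAbove k) := by
  rw [← compl_singleton, ← Fin.image_succAbove_univ, sum_image Fin.succAbove_right_injective.injOn]

namespace Pi

variable {ι : Type*} [LinearOrder ι] {β : ι → Type*} [∀ i, PartialOrder (β i)]

theorem toLex_update_lt_toLex_update {x y : ∀ i, β i} {i : ι} (hi : x i = y i)
    (h : toLex x < toLex y) (a : β i) : toLex (update x i a) < toLex (update y i a) := by
  obtain ⟨j, hj, hlt⟩ := h
  have hji : j ≠ i := by rintro rfl; exact hlt.ne hi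
  refine ⟨j, fun k hk => ?_, by simpa [hji] using hlt⟩
  rcases eq_or_ne k i with rfl | hki
  · simp
  · simpa [hki] using hj k hk

theorem toLex_update_le_toLex_update {x y : ∀ i, β i} {i : ι} (hi : x i = y i)
    (h : toLex x ≤ toLex y) (a : β i) : toLex (update x i a) ≤ toLex (update y i a) := by
  obtain h | h := h.lt_or_eq
  · exact (toLex_update_lt_toLex_update hi h a).le
  · rw [toLex_inj.1 h]

end Pi

section LexMinRepr

variable {ι G : Type*} [Fintype ι] [LinearOrder ι] [AddCommMonoid G]

def IsLexMinRepr [PartialOrder G] (A : ι → Finset G) (g : ι → G) : Prop :=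
  (∀ i, g i ∈ A i) ∧
    ∀ g' : ι → G, (∀ i, g' i ∈ A i) → ∑ i, g' i = ∑ i, g i → toLex g ≤ toLex g'

theorem exists_isLexMinRepr [LinearOrder G] (A : ι → Finset G) {x : G} (hx : x ∈ ∑ i, A i) :
    ∃ g, IsLexMinRepr A g ∧ ∑ i, g i = x := by
  rw [← mem_coe, coe_sum, Set.mem_fintype_sum] at hx
  obtain ⟨g₀, hg₀, rfl⟩ := hx
  obtain ⟨g, hg, hmin⟩ := exists_min_image {g ∈ Fintype.piFinset A | ∑ i, g i = ∑ i, g₀ i} toLex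
    ⟨g₀, by simpa using hg₀⟩
  simp only [mem_filter, Fintype.mem_piFinset] at hg hmin
  exact ⟨g, ⟨hg.1, fun g' hg' hsum => hmin g' ⟨hg', hsum.trans hg.2⟩⟩, hg.2⟩

theorem IsLexMinRepr.eq_of_sum_erase_eq [PartialOrder G] {A : ι → Finset G} {g g' : ι → G}
    (hg : IsLexMinRepr A g) (hg' : IsLexMinRepr A g') {i : ι}
    (h : ∑ j ∈ univ.erase i, g j = ∑ j ∈ univ.erase i, g' j) : ∀ j ≠ i, g j = g' j := by
  have hswap : ∀ a b : ι → G, ∑ j ∈ univ.erase i, a j = ∑ j ∈ univ.erase i, b j →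
      ∑ j, update a i (b i) j = ∑ j, b j := fun a b hab => by
    rw [sum_update_of_mem (mem_univ i), sdiff_singleton_eq_erase, hab,
      add_sum_erase _ _ (mem_univ i)]
  have hmem : ∀ a b : ι → G, IsLexMinRepr A a → IsLexMinRepr A b → ∀ j, update a i (b i) j ∈ A j :=
    fun a b ha hb => (forall_update_iff a (p := fun j y => y ∈ A j)).2 ⟨hb.1 i, fun j _ => ha.1 j⟩
  have h₁ : toLex g' ≤ toLex (update g i (g' i)) := hg'.2 _ (hmem g g' hg hg') (hswap g g' h)
  have h₂ : toLex (update g i (g' i)) ≤ toLex g' := by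
    simpa using Pi.toLex_update_le_toLex_update (update_self i (g i) g').symm
      (hg.2 _ (hmem g' g hg' hg) (hswap g' g h.symm)) (g' i)
  intro j hj
  simpa [hj] using congrFun (toLex_inj.1 (h₂.antisymm h₁)) j

end LexMinRepr

section Sumset

variable {G : Type*} [AddCommMonoid G]

theorem card_image_comp_succAbove_le_card_sum_erase [PartialOrder G] [DecidableEq G] {n : ℕ}
    {A : Fin (n + 1) → Finset G} {R : Finset (Fin (n + 1) → G)}
    (hR : ∀ g ∈ R, IsLexMinRepr A g) (i : Fin (n + 1)) :
    #(R.image (· ∘ i.succAbove)) ≤ #(∑ j ∈ univ.erase i, A j) := by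
  refine card_le_card_of_injOn (fun q => ∑ k, q k) ?_ ?_
  · simp only [Set.MapsTo, coe_image, Set.mem_image, mem_coe, forall_exists_index, and_imp]
    rintro _ g hg rfl
    rw [← mem_coe, coe_sum, comp_def, ← Fin.sum_univ_erase_eq_sum_succAbove]
    exact Set.finsetSum_mem_finsetSum _ _ _ fun j _ => (hR g hg).1 j
  · simp only [Set.InjOn, coe_image, Set.mem_image, mem_coe]
    rintro _ ⟨g, hg, rfl⟩ _ ⟨g', hg', rfl⟩ h
    simp only [comp_apply, ← Fin.sum_univ_erase_eq_sum_succAbove] at h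
    funext k
    exact (hR g hg).eq_of_sum_erase_eq (hR g' hg') h _ (Fin.succAbove_ne i k)

theorem card_sum_pow_le_prod_card_sum_erase [LinearOrder G] {n : ℕ} (A : Fin (n + 2) → Finset G) :
    #(∑ i, A i) ^ (n + 1) ≤ ∏ i, #(∑ j ∈ univ.erase i, A j) := by
  obtain hS | hS := (∑ i, A i).eq_empty_or_nonempty
  · simp [hS]
  choose! r hr hr_sum using fun x (hx : x ∈ ∑ i, A i) => exists_isLexMinRepr A hx
  have hcard : #((∑ i, A i).image r) = #(∑ i, A i) :=
    card_image_of_injOn fun x hx y hy h => by rw [← hr_sum x hx, ← hr_sum y hy, h]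
  calc #(∑ i, A i) ^ (n + 1) = #((∑ i, A i).image r) ^ (n + 1) := by rw [hcard]
    _ ≤ ∏ i : Fin (n + 2), #(((∑ i, A i).image r).image (· ∘ i.succAbove)) := by
      exact card_pow_le_prod_card_image_comp_succAbove _ (hS.image r)
    _ ≤ _ := prod_le_prod' fun i _ =>
      card_image_comp_succAbove_le_card_sum_erase (by simpa using hr) i

end Sumset

theorem sumset_card_le_rpow_general (K : ℕ) (hK : 2 ≤ K) (A : Fin K → Finset ℤ) (s : ℝ)
    (hB : ∀ i, ((∑ j ∈ Finset.univ.erase i, A j).card : ℝ) ≤ s) :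
    ((∑ i, A i).card : ℝ) ≤ s ^ ((K : ℝ) / ((K : ℝ) - 1)) := by
  obtain ⟨n, rfl⟩ : ∃ n, K = n + 2 := ⟨K - 2, by omega⟩
  have hs : 0 ≤ s := (Nat.cast_nonneg _).trans (hB 0)
  have hpow : (#(∑ i, A i) : ℝ) ^ (n + 1) ≤ s ^ (n + 2) := by
    calc (#(∑ i, A i) : ℝ) ^ (n + 1) ≤ ∏ i, (#(∑ j ∈ univ.erase i, A j) : ℝ) := by
          exact_mod_cast card_sum_pow_le_prod_card_sum_erase A
      _ ≤ ∏ _i : Fin (n + 2), s := prod_le_prod (fun _ _ => by positivity) fun i _ => hB i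
      _ = s ^ (n + 2) := by simp
  have hexp : ((n + 2 : ℕ) : ℝ) / ((n + 2 : ℕ) - 1 : ℝ) = (n + 2 : ℕ) * ((n + 1 : ℕ) : ℝ)⁻¹ := by
    push_cast; ring
  rw [hexp, Real.rpow_mul hs, Real.rpow_natCast, Real.le_rpow_inv_iff_of_pos (by positivity)
    (by positivity) (by positivity), Real.rpow_natCast]
  exact_mod_cast hpow

theorem sumset_card_le_rpow (K : ℕ) (hK : 2 ≤ K) (A : Fin K → Finset ℤ)
    (hA : ∀ i, (A i).Nonempty) (s : ℝ) (hs : 1 ≤ s)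
    (hB : ∀ i, ((∑ j ∈ Finset.univ.erase i, A j).card : ℝ) ≤ s) :
    ((∑ i, A i).card : ℝ) ≤ s ^ ((K : ℝ) / ((K : ℝ) - 1)) :=
  sumset_card_le_rpow_general K hK A s hB
end

section
/- (Injection bounding subset-sum counts) Let X be a finite multiset of nonnegative integers with a partition X = X₁ ⊎ X₂, and let t ≥ 0. Then every z ∈ S(X, t) can be written as z = x + z₁ + z₁′ + z₂ + z₂′ where x ∈ X ∪ {0}, z₁, z₁′ ∈ S(X₁, t/2), and z₂, z₂′ ∈ S(X₂, t/2). Consequently, |S(X, t)| ≤ (|X| + 1) · |S(X₁, t/2)|² · |S(X₂, t/2)|². -/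
/-- The set of subset sums of the multiset `X` that are at most the real threshold `s`. -/
def subsetSumsR (X : Multiset ℕ) (s : ℝ) : Set ℕ :=
  {z | (z : ℝ) ≤ s ∧ ∃ Y ≤ X, Y.sum = z}

/-!
Write a subset sum `z ≤ t` as the sum of a submultiset `Y`, and set aside a largest element `a`
of `Y`. The rest of `Y` splits along `X = X₁ + X₂` into `Y₁ + Y₂`, and each part `W` satisfies
`W.sum + b ≤ t` for all `b ∈ W`, since `b ≤ a`. Such a `W` splits greedily into two halves of sum
at most `t / 2`: take a largest submultiset of sum at most `t / 2`; adding any remaining `b` pushes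
its sum past `t / 2`, so the remainder has sum less than `W.sum + b - t / 2 ≤ t / 2`. Counting the
choices of `(a, z₁, z₁', z₂, z₂')` gives the bound.
-/

open scoped Pointwise

theorem Set.ncard_add_le {M : Type*} [Add M] [IsCancelAdd M] (s t : Set M) :
    (s + t).ncard ≤ s.ncard * t.ncard := by
  simpa only [Nat.card_coe_set_eq] using Set.natCard_add_le (s := s) (t := t)

namespace Multiset

theorem exists_eq_add_of_le_add {α : Type*} {Y X₁ X₂ : Multiset α} (hY : Y ≤ X₁ + X₂) :
    ∃ Y₁ ≤ X₁, ∃ Y₂ ≤ X₂, Y = Y₁ + Y₂ := by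
  classical
  refine ⟨Y ∩ X₁, inter_le_right, Y - X₁,
    Multiset.sub_le_iff_le_add.mpr (add_comm X₁ X₂ ▸ hY), ?_⟩
  rw [add_comm, sub_add_inter]

theorem sum_le_sum_of_le {α : Type*} [AddCommMonoid α] [PartialOrder α] [CanonicallyOrderedAdd α]
    {Y Z : Multiset α} (h : Y ≤ Z) : Y.sum ≤ Z.sum := by
  obtain ⟨U, rfl⟩ := le_iff_exists_add.mp h
  simp

theorem exists_le_two_mul_sum_le (W : Multiset ℕ) (t : ℕ) (h : ∀ b ∈ W, W.sum + b ≤ t) :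
    ∃ A ≤ W, 2 * A.sum ≤ t ∧ 2 * (W - A).sum ≤ t := by
  classical
  obtain ⟨A, hA, hAmax⟩ := (W.powerset.toFinset.filter fun A => 2 * A.sum ≤ t).exists_max_image
    card ⟨0, by simp⟩
  simp only [Finset.mem_filter, mem_toFinset, mem_powerset] at hA hAmax
  refine ⟨A, hA.1, hA.2, ?_⟩
  obtain hWA | ⟨b, hb⟩ := (W - A).empty_or_exists_mem
  · simp [hWA]
  have hbA : b ::ₘ A ≤ W := by
    rw [← singleton_add, ← tsub_add_cancel_of_le hA.1]
    exact Multiset.add_le_add_right (singleton_le.mpr hb)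
  have hbA_sum : t < 2 * (b + A.sum) := by
    by_contra! hle
    have := hAmax _ ⟨hbA, by rwa [sum_cons]⟩
    rw [card_cons] at this
    omega
  have hsum : A.sum + (W - A).sum = W.sum := by rw [← sum_add, add_tsub_cancel_of_le hA.1]
  have := h b (mem_of_le (Multiset.sub_le_self _ _) hb)
  omega

theorem sum_add_le_sum_of_le_erase {Y W : Multiset ℕ} {a b : ℕ} (ha : a ∈ Y)
    (hmax : ∀ c ∈ Y, c ≤ a) (hW : W ≤ Y.erase a) (hb : b ∈ W) : W.sum + b ≤ Y.sum := by
  have hba : b ≤ a := hmax b (mem_of_le (hW.trans (erase_le a Y)) hb)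
  have := sum_le_sum_of_le hW
  have := sum_erase ha
  omega

end Multiset

open Multiset

theorem finite_subsetSumsR (X : Multiset ℕ) (s : ℝ) : (subsetSumsR X s).Finite :=
  (Set.finite_Iic X.sum).subset fun _ ⟨_, _, hY, hz⟩ => hz ▸ sum_le_sum_of_le hY

theorem sum_mem_subsetSumsR_half {Z W : Multiset ℕ} {t : ℕ} (hW : W ≤ Z) (ht : 2 * W.sum ≤ t) :
    W.sum ∈ subsetSumsR Z ((t : ℝ) / 2) := by
  refine ⟨?_, W, hW, rfl⟩
  rw [le_div_iff₀ two_pos]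
  exact_mod_cast (by omega : W.sum * 2 ≤ t)

theorem exists_add_eq_sum_of_forall_sum_add_le {Z W : Multiset ℕ} {t : ℕ} (hW : W ≤ Z)
    (h : ∀ b ∈ W, W.sum + b ≤ t) :
    ∃ z ∈ subsetSumsR Z ((t : ℝ) / 2), ∃ z' ∈ subsetSumsR Z ((t : ℝ) / 2), W.sum = z + z' := by
  obtain ⟨A, hA, hAt, hBt⟩ := W.exists_le_two_mul_sum_le t h
  refine ⟨_, sum_mem_subsetSumsR_half (hA.trans hW) hAt,
    _, sum_mem_subsetSumsR_half ((Multiset.sub_le_self W A).trans hW) hBt, ?_⟩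
  rw [← sum_add, add_tsub_cancel_of_le hA]

theorem exists_eq_add_of_mem_subsetSumsR {X₁ X₂ : Multiset ℕ} {t : ℕ} {z : ℕ}
    (hz : z ∈ subsetSumsR (X₁ + X₂) t) : ∃ x, (x = 0 ∨ x ∈ X₁ + X₂) ∧
      ∃ z₁ ∈ subsetSumsR X₁ ((t : ℝ) / 2), ∃ z₁' ∈ subsetSumsR X₁ ((t : ℝ) / 2),
      ∃ z₂ ∈ subsetSumsR X₂ ((t : ℝ) / 2), ∃ z₂' ∈ subsetSumsR X₂ ((t : ℝ) / 2),
        z = x + z₁ + z₁' + z₂ + z₂' := by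
  classical
  obtain ⟨hzt, Y, hY, rfl⟩ := hz
  have hYt : Y.sum ≤ t := by exact_mod_cast hzt
  obtain rfl | hY0 := eq_or_ne Y 0
  · have h0 {Z : Multiset ℕ} : 0 ∈ subsetSumsR Z ((t : ℝ) / 2) :=
      sum_mem_subsetSumsR_half (zero_le Z) (by simp)
    exact ⟨0, .inl rfl, 0, h0, 0, h0, 0, h0, 0, h0, rfl⟩
  obtain ⟨a, ha, hmax⟩ := exists_max_image id hY0
  obtain ⟨Y₁, hY₁, Y₂, hY₂, hsplit⟩ :=
    exists_eq_add_of_le_add ((erase_le a Y).trans hY)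
  have hsmall {W : Multiset ℕ} (hW : W ≤ Y.erase a) : ∀ b ∈ W, W.sum + b ≤ t :=
    fun b hb => (sum_add_le_sum_of_le_erase ha hmax hW hb).trans hYt
  obtain ⟨z₁, h₁, z₁', h₁', hz₁⟩ :=
    exists_add_eq_sum_of_forall_sum_add_le hY₁ (hsmall (hsplit ▸ le_add_right le_rfl))
  obtain ⟨z₂, h₂, z₂', h₂', hz₂⟩ :=
    exists_add_eq_sum_of_forall_sum_add_le hY₂ (hsmall (hsplit ▸ le_add_left le_rfl))
  refine ⟨a, .inr (mem_of_le hY ha), z₁, h₁, z₁', h₁', z₂, h₂, z₂', h₂', ?_⟩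
  rw [← sum_erase ha, hsplit, sum_add, hz₁, hz₂]
  ring

theorem subset_sum_count_injection (X X₁ X₂ : Multiset ℕ) (hX : X = X₁ + X₂) (t : ℕ) :
    (∀ z ∈ subsetSumsR X t, ∃ x, (x = 0 ∨ x ∈ X) ∧
      ∃ z₁ ∈ subsetSumsR X₁ ((t : ℝ) / 2), ∃ z₁' ∈ subsetSumsR X₁ ((t : ℝ) / 2),
      ∃ z₂ ∈ subsetSumsR X₂ ((t : ℝ) / 2), ∃ z₂' ∈ subsetSumsR X₂ ((t : ℝ) / 2),
        z = x + z₁ + z₁' + z₂ + z₂') ∧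
    (subsetSumsR X t).ncard ≤ (Multiset.card X + 1) *
      (subsetSumsR X₁ ((t : ℝ) / 2)).ncard ^ 2 * (subsetSumsR X₂ ((t : ℝ) / 2)).ncard ^ 2 := by
  classical
  subst hX
  refine ⟨fun z hz => exists_eq_add_of_mem_subsetSumsR hz, ?_⟩
  set S₀ : Set ℕ := ↑(insert 0 (X₁ + X₂).toFinset)
  set S₁ := subsetSumsR X₁ ((t : ℝ) / 2)
  set S₂ := subsetSumsR X₂ ((t : ℝ) / 2)
  have hsub : subsetSumsR (X₁ + X₂) t ⊆ S₀ + S₁ + S₁ + S₂ + S₂ := by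
    intro z hz
    obtain ⟨x, hx, z₁, h₁, z₁', h₁', z₂, h₂, z₂', h₂', rfl⟩ := exists_eq_add_of_mem_subsetSumsR hz
    have hx : x ∈ S₀ := by simpa [S₀] using hx
    exact Set.add_mem_add (Set.add_mem_add (Set.add_mem_add (Set.add_mem_add hx h₁) h₁') h₂) h₂'
  have hS₀ : S₀.ncard ≤ card (X₁ + X₂) + 1 := by
    rw [Set.ncard_coe_finset]
    exact (Finset.card_insert_le _ _).trans (Nat.succ_le_succ (toFinset_card_le _))
  have hS₁ : S₁.Finite := finite_subsetSumsR X₁ _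
  have hS₂ : S₂.Finite := finite_subsetSumsR X₂ _
  calc (subsetSumsR (X₁ + X₂) t).ncard ≤ (S₀ + S₁ + S₁ + S₂ + S₂).ncard :=
        Set.ncard_le_ncard hsub ((((S₀.toFinite.add hS₁).add hS₁).add hS₂).add hS₂)
    _ ≤ S₀.ncard * S₁.ncard * S₁.ncard * S₂.ncard * S₂.ncard := by
        refine (Set.ncard_add_le _ _).trans (Nat.mul_le_mul_right _ ?_)
        refine (Set.ncard_add_le _ _).trans (Nat.mul_le_mul_right _ ?_)
        refine (Set.ncard_add_le _ _).trans (Nat.mul_le_mul_right _ ?_)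
        exact Set.ncard_add_le _ _
    _ ≤ (card (X₁ + X₂) + 1) * S₁.ncard ^ 2 * S₂.ncard ^ 2 := by
        rw [sq, sq, ← mul_assoc, ← mul_assoc]
        gcongr
end
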